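/- Let S = {(y₁, y₂, y₃, y₄) ∈ ℝ⁴ : y₁ ≥ 0, y₂ ≥ 0, y₁y₂ = y₃² + y₄²} and define π : S → ℝ³ by π(y₁,y₂,y₃,y₄) = ((y₁ − y₂)/2, y₃, y₄). Then π is a homeomorphism of S onto ℝ³, with inverse g : ℝ³ → S given by g(p₁,p₂,p₃) = (p₁ + √(p₁² + p₂² + p₃²), −p₁ + √(p₁² + p₂² + p₃²), p₂, p₃). Moreover g is Lipschitz; consequently there is a constant C > 0 such that |π(u) − π(v)| ≥ C|u − v| for all u, v ∈ S. -/

import Mathlib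

open scoped BigOperators

/-- The orbit space `S` of the standard circle action on `ℂ²`, realized as
`{(y₁,y₂,y₃,y₄) ∈ ℝ⁴ : y₁ ≥ 0, y₂ ≥ 0, y₁y₂ = y₃² + y₄²}`. -/
def Sorbit : Set (EuclideanSpace ℝ (Fin 4)) :=
  {y | 0 ≤ y 0 ∧ 0 ≤ y 1 ∧ y 0 * y 1 = (y 2) ^ 2 + (y 3) ^ 2}

/-- The model moment map `π(y₁,y₂,y₃,y₄) = ((y₁−y₂)/2, y₃, y₄)`. -/
noncomputable def momentPi (y : EuclideanSpace ℝ (Fin 4)) : EuclideanSpace ℝ (Fin 3) :=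
  WithLp.toLp 2 ![(y 0 - y 1) / 2, y 2, y 3]

/-- The inverse map `g(p₁,p₂,p₃) = (p₁+√(p₁²+p₂²+p₃²), −p₁+√(p₁²+p₂²+p₃²), p₂, p₃)`. -/
noncomputable def momentInv (p : EuclideanSpace ℝ (Fin 3)) : EuclideanSpace ℝ (Fin 4) :=
  WithLp.toLp 2 ![p 0 + Real.sqrt ((p 0) ^ 2 + (p 1) ^ 2 + (p 2) ^ 2),
    -p 0 + Real.sqrt ((p 0) ^ 2 + (p 1) ^ 2 + (p 2) ^ 2),
    p 1, p 2]


/-! On `S` one has `‖π y‖ = (y₁ + y₂)/2`, because `((y₁ - y₂)/2)² + y₃² + y₄² = ((y₁ + y₂)/2)²`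
exactly when `y₁y₂ = y₃² + y₄²`; this makes `g ∘ π = id` on `S`, while `π ∘ g = id` is immediate.
Writing `g p = (p₁ + ‖p‖, -p₁ + ‖p‖, p₂, p₃)`, the cross terms cancel in
`‖g p - g q‖² = 2(p₁ - q₁)² + (p₂ - q₂)² + (p₃ - q₃)² + 2(‖p‖ - ‖q‖)² ≤ 4‖p - q‖²`,
so `g` is `2`-Lipschitz, and a map with a `2`-Lipschitz right inverse is `2`-antilipschitz. -/

lemma abs_apply_le_norm {ι : Type*} [Fintype ι] (p : EuclideanSpace ℝ ι) (i : ι) :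
    |p i| ≤ ‖p‖ :=
  PiLp.norm_apply_le p i

lemma norm_sq_fin_three (p : EuclideanSpace ℝ (Fin 3)) :
    ‖p‖ ^ 2 = (p 0) ^ 2 + (p 1) ^ 2 + (p 2) ^ 2 := by
  rw [EuclideanSpace.real_norm_sq_eq, Fin.sum_univ_three]

lemma norm_sq_fin_four (y : EuclideanSpace ℝ (Fin 4)) :
    ‖y‖ ^ 2 = (y 0) ^ 2 + (y 1) ^ 2 + (y 2) ^ 2 + (y 3) ^ 2 := by
  rw [EuclideanSpace.real_norm_sq_eq, Fin.sum_univ_four]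

lemma sqrt_sum_sq_eq_norm (p : EuclideanSpace ℝ (Fin 3)) :
    Real.sqrt ((p 0) ^ 2 + (p 1) ^ 2 + (p 2) ^ 2) = ‖p‖ := by
  rw [← norm_sq_fin_three, Real.sqrt_sq (norm_nonneg p)]

section Coordinates

variable (y : EuclideanSpace ℝ (Fin 4)) (p : EuclideanSpace ℝ (Fin 3))

@[simp] lemma momentPi_apply_zero : momentPi y 0 = (y 0 - y 1) / 2 := rfl
@[simp] lemma momentPi_apply_one : momentPi y 1 = y 2 := rfl
@[simp] lemma momentPi_apply_two : momentPi y 2 = y 3 := rfl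

@[simp] lemma momentInv_apply_zero : momentInv p 0 = p 0 + ‖p‖ := by
  simp [momentInv, sqrt_sum_sq_eq_norm]
@[simp] lemma momentInv_apply_one : momentInv p 1 = -p 0 + ‖p‖ := by
  simp [momentInv, sqrt_sum_sq_eq_norm]
@[simp] lemma momentInv_apply_two : momentInv p 2 = p 1 := rfl
@[simp] lemma momentInv_apply_three : momentInv p 3 = p 2 := rfl

end Coordinates

lemma momentInv_mem (p : EuclideanSpace ℝ (Fin 3)) : momentInv p ∈ Sorbit := by
  obtain ⟨hneg, hpos⟩ := abs_le.1 (abs_apply_le_norm p 0)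
  refine ⟨?_, ?_, ?_⟩
  · simp only [momentInv_apply_zero]; linarith
  · simp only [momentInv_apply_one]; linarith
  · simp only [momentInv_apply_zero, momentInv_apply_one, momentInv_apply_two,
      momentInv_apply_three]
    linear_combination norm_sq_fin_three p

lemma momentPi_momentInv (p : EuclideanSpace ℝ (Fin 3)) : momentPi (momentInv p) = p := by
  ext i
  fin_cases i <;> simp

lemma norm_momentPi_of_mem {y : EuclideanSpace ℝ (Fin 4)} (hy : y ∈ Sorbit) :
    ‖momentPi y‖ = (y 0 + y 1) / 2 := by
  obtain ⟨hy0, hy1, hy⟩ := hy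
  refine (sq_eq_sq₀ (norm_nonneg _) (by linarith)).1 ?_
  rw [norm_sq_fin_three, momentPi_apply_zero, momentPi_apply_one, momentPi_apply_two]
  linear_combination -hy

lemma momentInv_momentPi {y : EuclideanSpace ℝ (Fin 4)} (hy : y ∈ Sorbit) :
    momentInv (momentPi y) = y := by
  ext i
  fin_cases i <;> simp [norm_momentPi_of_mem hy] <;> ring

lemma norm_momentInv_sub_sq (p q : EuclideanSpace ℝ (Fin 3)) :
    ‖momentInv p - momentInv q‖ ^ 2
      = 2 * (p 0 - q 0) ^ 2 + (p 1 - q 1) ^ 2 + (p 2 - q 2) ^ 2 + 2 * (‖p‖ - ‖q‖) ^ 2 := by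
  rw [norm_sq_fin_four]
  simp only [PiLp.sub_apply, momentInv_apply_zero, momentInv_apply_one, momentInv_apply_two,
    momentInv_apply_three]
  ring

lemma lipschitzWith_momentInv : LipschitzWith 2 momentInv := by
  refine LipschitzWith.of_dist_le_mul fun p q => ?_
  rw [dist_eq_norm, dist_eq_norm, NNReal.coe_ofNat]
  have hnorm : (‖p‖ - ‖q‖) ^ 2 ≤ ‖p - q‖ ^ 2 :=
    sq_le_sq.2 ((abs_norm_sub_norm_le p q).trans (le_abs_self _))
  have hsub := norm_sq_fin_three (p - q)
  simp only [PiLp.sub_apply] at hsub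
  refine (pow_le_pow_iff_left₀ (norm_nonneg _) (by positivity) two_ne_zero).1 ?_
  rw [norm_momentInv_sub_sq, mul_pow]
  linarith [sq_nonneg (p 1 - q 1), sq_nonneg (p 2 - q 2)]

lemma continuous_momentPi : Continuous momentPi := by
  unfold momentPi
  fun_prop

noncomputable def momentHomeo : Sorbit ≃ₜ EuclideanSpace ℝ (Fin 3) where
  toFun y := momentPi y
  invFun p := ⟨momentInv p, momentInv_mem p⟩
  left_inv y := Subtype.ext (momentInv_momentPi y.2)
  right_inv := momentPi_momentInv
  continuous_toFun := continuous_momentPi.comp continuous_subtype_val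
  continuous_invFun := lipschitzWith_momentInv.continuous.subtype_mk _

lemma antilipschitzWith_momentHomeo : AntilipschitzWith 2 momentHomeo :=
  (lipschitzWith_momentInv.subtype_mk momentInv_mem).to_rightInverse momentHomeo.left_inv

/-- Equation (27) of the paper: `π` is a homeomorphism of `S` onto `ℝ³` with
inverse `g`; moreover `g` is Lipschitz, so `|π(u) − π(v)| ≥ C|u − v|` on `S`. -/
theorem moment_map_model_homeomorphism :
    (∀ p : EuclideanSpace ℝ (Fin 3), momentInv p ∈ Sorbit) ∧
    (∀ y ∈ Sorbit, momentInv (momentPi y) = y) ∧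
    (∀ p : EuclideanSpace ℝ (Fin 3), momentPi (momentInv p) = p) ∧
    (∃ h : Sorbit ≃ₜ EuclideanSpace ℝ (Fin 3),
      (∀ y : Sorbit, h y = momentPi (y : EuclideanSpace ℝ (Fin 4))) ∧
      (∀ p : EuclideanSpace ℝ (Fin 3), ((h.symm p : Sorbit) : EuclideanSpace ℝ (Fin 4))
        = momentInv p)) ∧
    (∃ L : NNReal, LipschitzWith L momentInv) ∧
    (∃ C : ℝ, 0 < C ∧ ∀ u ∈ Sorbit, ∀ v ∈ Sorbit,
      C * ‖u - v‖ ≤ ‖momentPi u - momentPi v‖) := by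
  refine ⟨momentInv_mem, fun y hy => momentInv_momentPi hy, momentPi_momentInv,
    ⟨momentHomeo, fun _ => rfl, fun _ => rfl⟩, ⟨2, lipschitzWith_momentInv⟩,
    ⟨2⁻¹, by norm_num, fun u hu v hv => ?_⟩⟩
  have h := antilipschitzWith_momentHomeo.mul_le_dist ⟨u, hu⟩ ⟨v, hv⟩
  rwa [Subtype.dist_eq, dist_eq_norm, dist_eq_norm, NNReal.coe_inv, NNReal.coe_ofNat] at h
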